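/- Let k ≥ 2 and ℓ ≥ 6k be integers, and let u = (u_1,…,u_k, u_{ℓ−k+1},…,u_ℓ) be the 2k-tuple consisting of the first k and last k vertices of the (k,ℓ)-tight-path H^k_ℓ. Then m(H^k_ℓ, u) ≤ 1 + 8k^2/ℓ. -/

import Mathlib

open MeasureTheory Finset

/-- The Bernoulli measure on `Bool` with parameter `p`. -/
noncomputable def bern (p : ℝ) : Measure Bool :=
  ENNReal.ofReal p • Measure.dirac true + ENNReal.ofReal (1 - p) • Measure.dirac false

instance bernFinite (p : ℝ) : IsFiniteMeasure (bern p) := by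
  constructor
  simp only [bern, Measure.add_apply, Measure.smul_apply, smul_eq_mul, measure_univ, mul_one]
  exact ENNReal.add_lt_top.2 ⟨ENNReal.ofReal_lt_top, ENNReal.ofReal_lt_top⟩

/-- Product Bernoulli measure: independent `p`-coins indexed by `ι`. -/
noncomputable def prodBern (ι : Type*) [Fintype ι] (p : ℝ) : Measure (ι → Bool) :=
  Measure.pi fun _ => bern p

/-- Cyclic addition on `Fin n`. -/
def rotAdd {n : ℕ} (i : Fin n) (d : ℕ) : Fin n := ⟨(i.val + d) % n, Nat.mod_lt _ i.pos⟩

/-- A (hyper)graph: a finite vertex set together with a finite set of edges. -/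
structure HyperG (V : Type*) where
  verts : Finset V
  edges : Finset (Finset V)

namespace HyperG

variable {V W : Type*}

/-- Well-formedness: every edge is a set of vertices. -/
def Wf (H : HyperG V) : Prop := ∀ e ∈ H.edges, e ⊆ H.verts

/-- Number of vertices `v(H)`. -/
def vcount (H : HyperG V) : ℕ := H.verts.card

/-- Number of edges `e(H)`. -/
def ecount (H : HyperG V) : ℕ := H.edges.card

/-- `H` is `k`-uniform: every edge has exactly `k` vertices. -/
def IsUniform (k : ℕ) (H : HyperG V) : Prop := ∀ e ∈ H.edges, e.card = k

/-- `H'` is a sub(hyper)graph of `H`. -/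
def IsSub (H' H : HyperG V) : Prop := H'.verts ⊆ H.verts ∧ H'.edges ⊆ H.edges

/-- A set of vertices is independent if it contains no edge. -/
def IsIndepSet (H : HyperG V) (s : Finset V) : Prop := ∀ e ∈ H.edges, ¬ e ⊆ s

/-- `f` is an isomorphism from `F` onto `F'`. -/
def IsIso [DecidableEq W] (f : V → W) (F : HyperG V) (F' : HyperG W) : Prop :=
  Set.InjOn f ↑F.verts ∧ F.verts.image f = F'.verts ∧
    F.edges.image (fun e => e.image f) = F'.edges

/-- `F'` is an `(F, x, y)`-copy inside `G`: a subgraph of `G` isomorphic to `F`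
via an isomorphism sending the tuple `x` (coordinatewise) to the tuple `y`. -/
def IsCopy [DecidableEq W] (G : HyperG W) (F : HyperG V) {r : ℕ}
    (x : Fin r → V) (y : Fin r → W) (F' : HyperG W) : Prop :=
  F'.IsSub G ∧ ∃ f : V → W, IsIso f F F' ∧ ∀ j, f (x j) = y j

/-- The `m(F, X)`-density. -/
noncomputable def mDensity [DecidableEq V] (F : HyperG V) (X : Finset V) : ℝ :=
  sSup {q : ℝ | ∃ F' : HyperG V, F'.IsSub F ∧ F'.Wf ∧ 0 < F'.ecount ∧
    (X ⊆ F'.verts ∨ X ∩ F'.verts = ∅) ∧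
    q = (F'.ecount : ℝ) / ((F'.vcount : ℝ) - max 1 ((F'.verts ∩ X).card : ℝ))}

/-- The `m_1`-density. -/
noncomputable def m1 [DecidableEq V] (F : HyperG V) : ℝ := mDensity F ∅

/-- `H` is `k`-degenerate: there is an ordering of the vertices such that each vertex
closes at most `k` edges lying entirely among it and earlier vertices. -/
def IsDegenerate [DecidableEq V] (k : ℕ) (H : HyperG V) : Prop :=
  ∃ (h : ℕ) (v : Fin h → V), Function.Injective v ∧ Finset.univ.image v = H.verts ∧
    ∀ i : Fin h,
      (H.edges.filter (fun e => v i ∈ e ∧ ∀ u ∈ e, ∃ j : Fin h, j ≤ i ∧ v j = u)).card ≤ k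

end HyperG

/-- The `k`-uniform hypergraph on `[n]` determined by a boolean choice for each
`k`-element subset. -/
def hyperOf (n k : ℕ) (ω : {s : Finset (Fin n) // s.card = k} → Bool) : HyperG (Fin n) where
  verts := Finset.univ
  edges := (Finset.univ.filter (fun s : {s : Finset (Fin n) // s.card = k} => ω s = true)).image
    Subtype.val

/-- The graph on `[n]` determined by a boolean choice for each unordered pair. -/
def graphOf (n : ℕ) (ω : Sym2 (Fin n) → Bool) : HyperG (Fin n) where
  verts := Finset.univ
  edges := Finset.univ.filter
    (fun s : Finset (Fin n) => ∃ u v : Fin n, u ≠ v ∧ s = {u, v} ∧ ω s(u, v) = true)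

/-- The `k`-th power of a path on the `m`-tuple `u(0), …, u(m-1)`. -/
def powerPathOn {V : Type*} [DecidableEq V] (k m : ℕ) (u : ℕ → V) : HyperG V where
  verts := (Finset.range m).image u
  edges := ((Finset.range m ×ˢ Finset.range m).filter
      (fun ij => ij.1 < ij.2 ∧ ij.2 ≤ ij.1 + k)).image (fun ij => {u ij.1, u ij.2})

/-- The `(k, m)`-tight-path (a `(k+1)`-uniform hypergraph) on the tuple `u(0), …, u(m-1)`. -/
def tightPathOn {V : Type*} [DecidableEq V] (k m : ℕ) (u : ℕ → V) : HyperG V where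
  verts := (Finset.range m).image u
  edges := (Finset.range (m - k)).image (fun i => (Finset.Icc i (i + k)).image u)

/-- The `(k, m)`-path `P^k_m` on vertex set `{0, …, m-1}`. -/
def powerPath (k m : ℕ) : HyperG ℕ := powerPathOn k m id

/-- The `(k, m)`-tight-path `H^k_m` on vertex set `{0, …, m-1}`. -/
def tightPath (k m : ℕ) : HyperG ℕ := tightPathOn k m id

/-- The `(k, m)`-connecting-path `CP^k_m` on vertex set `{0, …, m-1}`:
the `(k,m)`-path with all edges inside the first `k` or inside the last `k`
vertices removed. -/
def connPath (k m : ℕ) : HyperG ℕ where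
  verts := Finset.range m
  edges := ((Finset.range m ×ˢ Finset.range m).filter
      (fun ij => ij.1 < ij.2 ∧ ij.2 ≤ ij.1 + k ∧
        ((k ≤ ij.1 ∧ ij.1 < m - k) ∨ (k ≤ ij.2 ∧ ij.2 < m - k)))).image
      (fun ij => ({ij.1, ij.2} : Finset ℕ))

/-- The `2k`-tuple consisting of the first `k` and the last `k` vertices of a path
on vertex set `{0, …, m-1}`. -/
def endsTuple (k m : ℕ) : Fin (k + k) → ℕ :=
  Fin.append (fun j : Fin k => (j : ℕ)) (fun j : Fin k => m - k + (j : ℕ))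

/-- `A` is an `(a, b, X)`-absorber (with respect to the family of paths `Pfam`,
e.g. `powerPath k` or `tightPath k`): for every `X' ⊆ X` there is a path from `a`
to `b` in `A` whose vertex set is `V(A) \ X'`. -/
def HyperG.IsAbsorber {V : Type*} [DecidableEq V] (k : ℕ) (Pfam : ℕ → HyperG ℕ)
    (A : HyperG V) (a b : Fin k → V) (X : Finset V) : Prop :=
  ∀ X' ⊆ X, ∃ m : ℕ, 2 * k ≤ m ∧ ∃ P : HyperG V,
    A.IsCopy (Pfam m) (endsTuple k m) (Fin.append a b) P ∧ P.verts = A.verts \ X'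

/-- The vertex `w_{i,j}` of the backbone graph, coded as a natural number
(`x` is coded as `0`). -/
def bw (k i j : ℕ) : ℕ := 1 + (i - 1) * (2 * k) + (j - 1)

/-- The `(2k+1)`-tuple `(w_1^a, x, w_1^b)`. -/
def bt1 (k : ℕ) : ℕ → ℕ := fun t => if t < k then bw k 1 (t + 1) else if t = k then 0 else bw k 1 t

/-- The `2k`-tuple `(w_i^a, w_i^b)`. -/
def bt2 (k i : ℕ) : ℕ → ℕ := fun t => bw k i (t + 1)

/-- The `2k`-tuple `(w_2^a, reverse of w_1^a)`. -/
def bt3 (k : ℕ) : ℕ → ℕ := fun t => if t < k then bw k 2 (t + 1) else bw k 1 (2 * k - t)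

/-- The `2k`-tuple `(w_{i+2}^a, w_i^b)`. -/
def bt4 (k i : ℕ) : ℕ → ℕ := fun t => if t < k then bw k (i + 2) (t + 1) else bw k i (t + 1)

/-- The `2k`-tuple `(reverse of w_ℓ^b, w_{ℓ-1}^b)`. -/
def bt5 (k ℓ : ℕ) : ℕ → ℕ := fun t => if t < k then bw k ℓ (2 * k - t) else bw k (ℓ - 1) (t + 1)

/-- The backbone graph `B^k_ℓ`. -/
def bbG (k ℓ : ℕ) : HyperG ℕ where
  verts := Finset.range (2 * k * ℓ + 1)
  edges := (powerPathOn k (2 * k + 1) (bt1 k)).edges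
    ∪ (Finset.Icc 2 ℓ).biUnion (fun i => (powerPathOn k (2 * k) (bt2 k i)).edges)
    ∪ (powerPathOn k (2 * k) (bt3 k)).edges
    ∪ (Finset.Icc 1 (ℓ - 2)).biUnion (fun i => (powerPathOn k (2 * k) (bt4 k i)).edges)
    ∪ (powerPathOn k (2 * k) (bt5 k ℓ)).edges

/-- The backbone `(k+1)`-uniform hypergraph `BH^k_ℓ`. -/
def bbH (k ℓ : ℕ) : HyperG ℕ where
  verts := Finset.range (2 * k * ℓ + 1)
  edges := (tightPathOn k (2 * k + 1) (bt1 k)).edges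
    ∪ (Finset.Icc 2 ℓ).biUnion (fun i => (tightPathOn k (2 * k) (bt2 k i)).edges)
    ∪ (tightPathOn k (2 * k) (bt3 k)).edges
    ∪ (Finset.Icc 1 (ℓ - 2)).biUnion (fun i => (tightPathOn k (2 * k) (bt4 k i)).edges)
    ∪ (tightPathOn k (2 * k) (bt5 k ℓ)).edges

lemma card_union_sdiff' (A B : Finset ℕ) : (A ∪ B).card = A.card + (B \ A).card := by
  rw [union_comm, ← Finset.card_sdiff_add_card]; omega

lemma gain_sub (k ℓ b c : ℕ) (A : Finset ℕ) (hA : A ⊆ Ico 0 c ∪ Ico (ℓ - k) ℓ) :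
    Ico (max b c) (min (b + k + 1) (ℓ - k)) ⊆ Ico b (b + k + 1) \ A := by
  intro x hx
  rw [mem_Ico] at hx
  rw [mem_sdiff, mem_Ico]
  refine ⟨by omega, fun hxA => ?_⟩
  have := hA hxA
  simp only [mem_union, mem_Ico] at this
  omega

lemma X_U_sub (k ℓ c : ℕ) (s : Finset ℕ) (hc : k ≤ c) (hs : ∀ i ∈ s, i + k < c) :
    (range k ∪ Ico (ℓ - k) ℓ) ∪ s.biUnion (fun i => Ico i (i + k + 1)) ⊆
      Ico 0 c ∪ Ico (ℓ - k) ℓ := by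
  intro x hx
  simp only [mem_union, mem_range, mem_Ico, mem_biUnion] at hx ⊢
  rcases hx with (h | h) | ⟨i, hi, hx⟩
  · left; omega
  · right; exact h
  · left; have := hs i hi; omega

lemma Ucard (k : ℕ) (S : Finset ℕ) (b : ℕ) (hb : b ∈ S) (hmax : ∀ i ∈ S, i ≤ b) :
    S.card + k ≤ (S.biUnion (fun i => Ico i (i + k + 1))).card := by
  have h1 : S ∪ Ico (b + 1) (b + k + 1) ⊆ S.biUnion (fun i => Ico i (i + k + 1)) := by
    intro x hx
    rcases mem_union.1 hx with h | h
    · exact mem_biUnion.2 ⟨x, h, by rw [mem_Ico]; omega⟩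
    · exact mem_biUnion.2 ⟨b, hb, by rw [mem_Ico] at h ⊢; omega⟩
  have h2 : Disjoint S (Ico (b + 1) (b + k + 1)) := by
    rw [disjoint_left]; intro x hx hx'
    have := hmax x hx; rw [mem_Ico] at hx'; omega
  have := card_le_card h1
  rw [card_union_of_disjoint h2, Nat.card_Ico] at this
  omega

lemma key (k ℓ : ℕ) (hk : 2 ≤ k) (hl : 6 * k ≤ ℓ) (S : Finset ℕ) :
    ∀ a b : ℕ, a ∈ S → b ∈ S → (∀ i ∈ S, a ≤ i ∧ i ≤ b) → (∀ i ∈ S, i + k < ℓ) →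
    (S.card + k + min a k + min k (ℓ - k - 1 - b) ≤
      ((range k ∪ Ico (ℓ - k) ℓ) ∪ S.biUnion (fun i => Ico i (i + k + 1))).card)
    ∧ (S.biUnion (fun i => Ico i (i + k + 1)) = Ico a (b + k + 1) ∨
       S.card + 2 * k + min k (ℓ - k - 1 - b) ≤
        ((range k ∪ Ico (ℓ - k) ℓ) ∪ S.biUnion (fun i => Ico i (i + k + 1))).card) := by
  induction S using Finset.induction_on_max with
  | empty => intro a b ha; exact absurd ha (notMem_empty a)
  | insert m s hms ih =>
    intro a b ha hb hbd hrange
    have hbm : b = m := by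
      have h1 : m ≤ b := (hbd m (mem_insert_self m s)).2
      rcases mem_insert.1 hb with h | h
      · omega
      · have := hms b h; omega
    subst hbm
    have hbl : b + k < ℓ := hrange b (mem_insert_self b s)
    have hXd : Disjoint (range k) (Ico (ℓ - k) ℓ) := by
      rw [disjoint_left]; intro x hx hx'
      rw [mem_range] at hx; rw [mem_Ico] at hx'; omega
    have hXcard : (range k ∪ Ico (ℓ - k) ℓ).card = 2 * k := by
      rw [card_union_of_disjoint hXd, card_range, Nat.card_Ico]; omega
    rcases s.eq_empty_or_nonempty with rfl | hs
    · -- base case: S = {b}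
      have hab : a = b := by
        rcases mem_insert.1 ha with h | h
        · exact h
        · exact absurd h (notMem_empty a)
      subst hab
      have hU : (insert a (∅ : Finset ℕ)).biUnion (fun i => Ico i (i + k + 1))
          = Ico a (a + k + 1) := by
        rw [insert_empty_eq, singleton_biUnion]
      rw [hU]
      have hXsub : (range k ∪ Ico (ℓ - k) ℓ : Finset ℕ) ⊆ Ico 0 k ∪ Ico (ℓ - k) ℓ := by
        rw [range_eq_Ico]
      have hg := card_le_card (gain_sub k ℓ a k _ hXsub)
      rw [Nat.card_Ico] at hg
      have hc : ((range k ∪ Ico (ℓ - k) ℓ) ∪ Ico a (a + k + 1)).card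
          = (range k ∪ Ico (ℓ - k) ℓ).card + (Ico a (a + k + 1) \ (range k ∪ Ico (ℓ - k) ℓ)).card :=
        card_union_sdiff' _ _
      constructor
      · rw [hc, hXcard]; simp only [card_insert_of_notMem (notMem_empty a), card_empty]
        omega
      · left; rfl
    · -- inductive case
      set b' := s.max' hs with hb'def
      have hb's : b' ∈ s := s.max'_mem hs
      have hb'max : ∀ i ∈ s, i ≤ b' := fun i hi => s.le_max' i hi
      have hb'b : b' < b := hms b' hb's
      have hb'l : b' + k < ℓ := hrange b' (mem_insert_of_mem hb's)
      have has : a ∈ s := by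
        rcases mem_insert.1 ha with h | h
        · exfalso; have := (hbd b' (mem_insert_of_mem hb's)).1; omega
        · exact h
      have hab' : a ≤ b' := (hbd b' (mem_insert_of_mem hb's)).1
      obtain ⟨h1, h2⟩ := ih a b' has hb's
        (fun i hi => ⟨(hbd i (mem_insert_of_mem hi)).1, hb'max i hi⟩)
        (fun i hi => hrange i (mem_insert_of_mem hi))
      have hUins : (insert b s).biUnion (fun i => Ico i (i + k + 1))
          = Ico b (b + k + 1) ∪ s.biUnion (fun i => Ico i (i + k + 1)) := biUnion_insert
      have hXU : (range k ∪ Ico (ℓ - k) ℓ) ∪ (insert b s).biUnion (fun i => Ico i (i + k + 1))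
          = ((range k ∪ Ico (ℓ - k) ℓ) ∪ s.biUnion (fun i => Ico i (i + k + 1)))
            ∪ Ico b (b + k + 1) := by
        rw [hUins]; ac_rfl
      set A := (range k ∪ Ico (ℓ - k) ℓ) ∪ s.biUnion (fun i => Ico i (i + k + 1)) with hAdef
      have hAsub : A ⊆ Ico 0 (b' + k + 1) ∪ Ico (ℓ - k) ℓ :=
        X_U_sub k ℓ (b' + k + 1) s (by omega) (fun i hi => by have := hb'max i hi; omega)
      have hg := card_le_card (gain_sub k ℓ b (b' + k + 1) A hAsub)
      rw [Nat.card_Ico] at hg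
      have hcard : A.card + (min (b + k + 1) (ℓ - k) - max b (b' + k + 1)) ≤
          (A ∪ Ico b (b + k + 1)).card := by
        rw [card_union_sdiff' A (Ico b (b + k + 1))]; omega
      have hbnotin : b ∉ s := fun h => absurd (hms b h) (lt_irrefl b)
      have hcardins : (insert b s).card = s.card + 1 := card_insert_of_notMem hbnotin
      rw [hXU, hcardins]
      constructor
      · omega
      · rcases h2 with hrun | h2
        · by_cases hnear : b ≤ b' + k + 1
          · left
            rw [hUins, hrun, Finset.Ico_union_Ico' (by omega) (by omega)]
            congr 1 <;> omega
          · right; omega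
        · right; omega


lemma endsTuple_image (k ℓ : ℕ) (hk : 2 ≤ k) (hl : 6 * k ≤ ℓ) :
    Finset.image (endsTuple k ℓ) Finset.univ = range k ∪ Ico (ℓ - k) ℓ := by
  ext x
  simp only [mem_image, mem_univ, true_and, mem_union, mem_range, mem_Ico]
  constructor
  · rintro ⟨j, rfl⟩
    refine Fin.addCases (fun i => ?_) (fun i => ?_) j
    · rw [endsTuple, Fin.append_left]
      left; exact i.isLt
    · rw [endsTuple, Fin.append_right]
      right; have := i.isLt; omega
  · rintro (h | ⟨h1, h2⟩)
    · exact ⟨Fin.castAdd k ⟨x, h⟩, by rw [endsTuple, Fin.append_left]⟩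
    · refine ⟨Fin.natAdd k ⟨x - (ℓ - k), by omega⟩, ?_⟩
      rw [endsTuple, Fin.append_right]
      simp only
      omega

/-- The density of the tight path relative to its ends:
`m(H^k_ℓ, u) ≤ 1 + 8k²/ℓ` for `ℓ ≥ 6k`. -/
theorem tightPath_density (k ℓ : ℕ) (hk : 2 ≤ k) (hℓ : 6 * k ≤ ℓ) :
    (tightPath k ℓ).mDensity (Finset.image (endsTuple k ℓ) Finset.univ) ≤
      1 + 8 * (k : ℝ) ^ 2 / (ℓ : ℝ) := by
  have hkR : (2 : ℝ) ≤ k := by exact_mod_cast hk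
  have hlR : (6 : ℝ) * k ≤ ℓ := by exact_mod_cast hℓ
  have hl0 : (0 : ℝ) < ℓ := by nlinarith
  have h8 : (0 : ℝ) ≤ 8 * (k : ℝ) ^ 2 / ℓ := by positivity
  rw [endsTuple_image k ℓ hk hℓ, HyperG.mDensity]
  apply Real.sSup_le _ (by linarith)
  rintro q ⟨F', hsub, hwf, he, hXcase, rfl⟩
  set X : Finset ℕ := range k ∪ Ico (ℓ - k) ℓ with hXdef
  -- extract the index set of edges
  set S : Finset ℕ := (range (ℓ - k)).filter (fun i => Finset.Icc i (i + k) ∈ F'.edges)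
    with hSdef
  have hedges : ∀ t ∈ F'.edges, ∃ i ∈ S, t = Finset.Icc i (i + k) := by
    intro t ht
    have h := hsub.2 ht
    simp only [tightPath, tightPathOn, Finset.mem_image, Finset.mem_range,
      Finset.image_id] at h
    obtain ⟨i, hi, hti⟩ := h
    exact ⟨i, by simp only [hSdef, mem_filter, mem_range]; exact ⟨hi, hti ▸ ht⟩, hti.symm⟩
  have hSedges : F'.edges = S.image (fun i => Finset.Icc i (i + k)) := by
    ext t
    constructor
    · intro ht; obtain ⟨i, hi, rfl⟩ := hedges t ht; exact mem_image_of_mem _ hi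
    · intro ht; obtain ⟨i, hi, rfl⟩ := mem_image.1 ht
      exact (mem_filter.1 hi).2
  have hinj : Set.InjOn (fun i => Finset.Icc i (i + k)) S := by
    intro i _ j _ hij
    simp only at hij
    have h1 : i ∈ Finset.Icc j (j + k) := hij ▸ Finset.mem_Icc.2 ⟨le_refl i, by omega⟩
    have h2 : j ∈ Finset.Icc i (i + k) := hij ▸ Finset.mem_Icc.2 ⟨le_refl j, by omega⟩
    rw [Finset.mem_Icc] at h1 h2
    omega
  have hecard : F'.ecount = S.card := by
    rw [HyperG.ecount, hSedges, Finset.card_image_of_injOn hinj]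
  have hSne : S.Nonempty := by
    rw [← Finset.card_pos, ← hecard]; exact he
  have hSrange : ∀ i ∈ S, i + k < ℓ := by
    intro i hi
    have := (mem_filter.1 hi).1
    rw [mem_range] at this
    omega
  have hUv : S.biUnion (fun i => Ico i (i + k + 1)) ⊆ F'.verts := by
    intro x hx
    obtain ⟨i, hi, hxi⟩ := mem_biUnion.1 hx
    have hie : Finset.Icc i (i + k) ∈ F'.edges := (mem_filter.1 hi).2
    apply hwf _ hie
    rw [mem_Ico] at hxi
    rw [Finset.mem_Icc]
    omega
  have hUvcard : (S.biUnion (fun i => Ico i (i + k + 1))).card ≤ F'.vcount :=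
    card_le_card hUv
  set a := S.min' hSne with hadef
  set b := S.max' hSne with hbdef
  have hbS : b ∈ S := S.max'_mem hSne
  have hbl : b + k < ℓ := hSrange b hbS
  have hK := key k ℓ hk hℓ S a b (S.min'_mem hSne) hbS
    (fun i hi => ⟨S.min'_le i hi, S.le_max' i hi⟩) hSrange
  rw [← hXdef] at hK
  have heS : 1 ≤ S.card := Finset.card_pos.2 hSne
  rcases hXcase with hXv | hXd
  · -- X is contained in the vertex set
    have hcX : F'.verts ∩ X = X := inter_eq_right.2 hXv
    have hXd2 : Disjoint (range k) (Ico (ℓ - k) ℓ) := by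
      rw [disjoint_left]; intro x hx hx'
      rw [mem_range] at hx; rw [mem_Ico] at hx'; omega
    have hXcard : X.card = 2 * k := by
      rw [hXdef, card_union_of_disjoint hXd2, card_range, Nat.card_Ico]; omega
    have hvX : (X ∪ S.biUnion (fun i => Ico i (i + k + 1))).card ≤ F'.vcount :=
      card_le_card (union_subset hXv hUv)
    have hScard : S.card + k ≤ ℓ := by
      have h := card_le_card (show S ⊆ range (ℓ - k) from filter_subset _ _)
      rw [card_range] at h
      omega
    have hmain : F'.ecount + 2 * k ≤ F'.vcount ∨
        (ℓ + 1 ≤ F'.vcount + k ∧ F'.ecount + k ≤ ℓ) := by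
      obtain ⟨h1, h2⟩ := hK
      rcases h2 with hrun | h2
      · by_cases hcase : k ≤ min a k + min k (ℓ - k - 1 - b)
        · left; omega
        · right
          have hUcard : (S.biUnion (fun i => Ico i (i + k + 1))).card = b + k + 1 - a := by
            rw [hrun, Nat.card_Ico]
          omega
      · left; omega
    rw [hcX, hXcard]
    have hmax : max (1 : ℝ) ((2 * k : ℕ) : ℝ) = 2 * (k : ℝ) := by
      rw [max_eq_right] <;> push_cast <;> linarith
    rw [hmax]
    rcases hmain with hv | ⟨hv, he'⟩
    · have hvR : (F'.ecount : ℝ) + 2 * k ≤ F'.vcount := by exact_mod_cast hv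
      have heR : (1 : ℝ) ≤ F'.ecount := by exact_mod_cast he
      have hden : (0 : ℝ) < (F'.vcount : ℝ) - 2 * k := by linarith
      rw [div_le_iff₀ hden]
      nlinarith [mul_nonneg h8 hden.le]
    · have hvR : (ℓ : ℝ) + 1 ≤ (F'.vcount : ℝ) + k := by exact_mod_cast hv
      have heR : (F'.ecount : ℝ) + k ≤ ℓ := by exact_mod_cast he'
      have hden : (0 : ℝ) < (F'.vcount : ℝ) - 2 * k := by linarith
      rw [div_le_iff₀ hden]
      have hexp : (1 + 8 * (k : ℝ) ^ 2 / ℓ) * ((F'.vcount : ℝ) - 2 * k)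
          = (((ℓ : ℝ) + 8 * k ^ 2) * ((F'.vcount : ℝ) - 2 * k)) / ℓ := by
        field_simp
      rw [hexp, le_div_iff₀ hl0]
      nlinarith [mul_nonneg (sub_nonneg.2 hlR) (sub_nonneg.2 hkR),
        mul_nonneg (sub_nonneg.2 hlR) (sq_nonneg (k : ℝ)),
        mul_nonneg (mul_nonneg (sub_nonneg.2 hkR) (by linarith : (0:ℝ) ≤ (k:ℝ))) (by linarith : (0:ℝ) ≤ (k:ℝ))]
  · -- X is disjoint from the vertex set
    have hcX : F'.verts ∩ X = ∅ := by rw [inter_comm]; exact hXd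
    rw [hcX]
    have hv : F'.ecount + k ≤ F'.vcount := by
      have := Ucard k S b hbS (fun i hi => S.le_max' i hi)
      omega
    have hvR : (F'.ecount : ℝ) + k ≤ F'.vcount := by exact_mod_cast hv
    have heR : (1 : ℝ) ≤ F'.ecount := by exact_mod_cast he
    simp only [card_empty, Nat.cast_zero]
    rw [max_eq_left zero_le_one]
    have hden : (0 : ℝ) < (F'.vcount : ℝ) - 1 := by linarith
    rw [div_le_iff₀ hden]
    nlinarith [mul_nonneg h8 hden.le]
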